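/- Every extreme point (E₁,E₂,ω₁,ω₂) of the quantum set Q admits a two-dimensional quantum representation in Bloch form: there exist unit vectors n₁, n₂, m, k in ℝ³ such that Eₓ = nₓ·m and (1 + nₓ·k)/2 ≤ ωₓ for x = 1,2; equivalently, the qubit states ρₓ = (1 + nₓ·σ)/2, the measurement M = m·σ and the energy operator O = (1 + k·σ)/2, where σ = (σₓ,σ_y,σ_z) is the vector of Pauli matrices, form a quantum representation of the behaviour. -/

import Mathlib

/-!
An extreme point of a convex hull lies in the generating set, so `(E, ω)` has a quantum
representation `(ρₓ, M, O, v)`. With `P = v vᴴ`, `e = Tr(P M)`, `Eₓ = Tr(ρₓ M)` and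
`pₓ = Tr(ρₓ P)`, the condition `O ⪰ 1 - P` gives `Tr(ρₓ O) ≥ 1 - pₓ`. Write
`2 pₓ = Tr(P ρₓ (1 - M)) + Tr(P ρₓ (1 + M))` and bound each term by Cauchy–Schwarz for the
positive sesquilinear form `(X, Y) ↦ Tr(Y ρₓ Xᴴ)`, taking `1 ± M = Bᴴ B`, `X = B`, `Y = B P` and
using `P ρₓ P = pₓ P`: this gives `2 √pₓ ≤ √((1 - e)(1 - Eₓ)) + √((1 + e)(1 + Eₓ))`, that is
`2 pₓ - 1 ≤ e Eₓ + √(1 - e²) √(1 - Eₓ²) = cos (θ - ψₓ)` where `cos θ = e` and `cos ψₓ = Eₓ`.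
So `m` at angle `θ` and `nₓ` at angle `θ - ψₓ` in a common plane, with `k = -e₁`, do the job.
-/

open scoped ComplexOrder

noncomputable section

/-- A behaviour `(E, ω)` admits a (finite-dimensional) quantum representation. -/
def IsQuantumRep (E ω : Fin 2 → ℝ) : Prop :=
  ∃ (d : ℕ) (ρ : Fin 2 → Matrix (Fin d) (Fin d) ℂ)
    (M O : Matrix (Fin d) (Fin d) ℂ) (v : Fin d → ℂ),
    (∀ x, (ρ x).PosSemidef) ∧ (∀ x, (ρ x).trace = 1) ∧
    M.IsHermitian ∧ (1 - M).PosSemidef ∧ (1 + M).PosSemidef ∧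
    O.IsHermitian ∧ O.mulVec v = 0 ∧ (∑ i, Complex.normSq (v i)) = 1 ∧
    (O - (1 - Matrix.vecMulVec v (star v))).PosSemidef ∧
    (∀ x, (ρ x * M).trace = (E x : ℂ)) ∧
    (∀ x, ((ρ x * O).trace).re ≤ ω x)

/-- The quantum set `Q`: all finite convex combinations of behaviours with a
quantum representation. -/
def QuantumSet : Set ((Fin 2 → ℝ) × (Fin 2 → ℝ)) :=
  convexHull ℝ {b | IsQuantumRep b.1 b.2}

end

open scoped MatrixOrder
open Matrix

namespace Matrix.PosSemidef

variable {𝕜 n : Type*} [RCLike 𝕜] [Fintype n]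

theorem trace_mul_nonneg {A B : Matrix n n 𝕜} (hA : A.PosSemidef) (hB : B.PosSemidef) :
    0 ≤ (A * B).trace := by
  classical
  obtain ⟨C, rfl⟩ := CStarAlgebra.nonneg_iff_eq_star_mul_self.mp hB.nonneg
  rw [star_eq_conjTranspose, ← Matrix.mul_assoc, trace_mul_cycle]
  exact (hA.mul_mul_conjTranspose_same C).trace_nonneg

theorem norm_trace_mul_mul_conjTranspose_sq_le {M : Matrix n n 𝕜} (hM : M.PosSemidef)
    (X Y : Matrix n n 𝕜) :
    ‖(Y * M * Xᴴ).trace‖ ^ 2 ≤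
      RCLike.re (X * M * Xᴴ).trace * RCLike.re (Y * M * Yᴴ).trace := by
  let _ := M.toMatrixSeminormedAddCommGroup hM
  let _ := M.toMatrixInnerProductSpace hM
  have := inner_mul_inner_self_le (𝕜 := 𝕜) X Y
  rwa [norm_inner_symm Y X, ← sq] at this

theorem norm_trace_mul_mul_sq_le {A ρ : Matrix n n 𝕜} (hA : A.PosSemidef) (hρ : ρ.PosSemidef)
    (P : Matrix n n 𝕜) :
    ‖(P * ρ * A).trace‖ ^ 2 ≤
      RCLike.re (ρ * A).trace * RCLike.re (P * ρ * Pᴴ * A).trace := by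
  classical
  obtain ⟨B, rfl⟩ := CStarAlgebra.nonneg_iff_eq_star_mul_self.mp hA.nonneg
  have := hρ.norm_trace_mul_mul_conjTranspose_sq_le B (B * P)
  simpa only [star_eq_conjTranspose, conjTranspose_mul, Matrix.mul_assoc, trace_mul_comm B]
    using this

end Matrix.PosSemidef

theorem Matrix.vecMulVec_mul_mul_conjTranspose {α n : Type*} [CommSemiring α] [StarRing α]
    [Fintype n] (v : n → α) (ρ : Matrix n n α) :
    vecMulVec v (star v) * ρ * (vecMulVec v (star v))ᴴ =
      (ρ * vecMulVec v (star v)).trace • vecMulVec v (star v) := by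
  rw [conjTranspose_vecMulVec, star_star, vecMulVec_mul, vecMulVec_mul_vecMulVec,
    vecMulVec_smul, mul_vecMulVec, trace_vecMulVec, ← dotProduct_mulVec, dotProduct_comm]

theorem two_mul_sub_one_le_of_sq_le {p e E x y : ℝ} (hp : 0 ≤ p) (he : |e| ≤ 1) (hE : |E| ≤ 1)
    (hxy : 2 * p ≤ x + y) (hx : x ^ 2 ≤ (1 - E) * (p * (1 - e)))
    (hy : y ^ 2 ≤ (1 + E) * (p * (1 + e))) :
    2 * p - 1 ≤ e * E + √(1 - e ^ 2) * √(1 - E ^ 2) := by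
  obtain ⟨he₁, he₂⟩ := abs_le.mp he
  obtain ⟨hE₁, hE₂⟩ := abs_le.mp hE
  set a := √((1 - e) * (1 - E))
  set b := √((1 + e) * (1 + E))
  have ha : a ^ 2 = (1 - e) * (1 - E) := Real.sq_sqrt (by nlinarith)
  have hb : b ^ 2 = (1 + e) * (1 + E) := Real.sq_sqrt (by nlinarith)
  have hab : a * b = √(1 - e ^ 2) * √(1 - E ^ 2) := by
    rw [← Real.sqrt_mul (by nlinarith), ← Real.sqrt_mul (by nlinarith)]
    ring_nf
  have hx' : x ≤ √p * a := by
    rw [← Real.sqrt_mul hp]; exact Real.le_sqrt_of_sq_le (by linarith)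
  have hy' : y ≤ √p * b := by
    rw [← Real.sqrt_mul hp]; exact Real.le_sqrt_of_sq_le (by linarith)
  have key : 4 * p ≤ (a + b) ^ 2 := by
    rcases hp.eq_or_lt with rfl | hpos
    · linarith [sq_nonneg (a + b)]
    · have hq : 0 < √p := Real.sqrt_pos.mpr hpos
      have : 2 * √p ≤ a + b :=
        le_of_mul_le_mul_left (by nlinarith [Real.mul_self_sqrt hp]) hq
      nlinarith [Real.sq_sqrt hp]
  nlinarith

section DensityMatrix

variable {n : Type*} [Fintype n] [DecidableEq n] {ρ M : Matrix n n ℂ}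

theorem abs_re_trace_mul_le_one (hρ : ρ.PosSemidef) (hρ1 : ρ.trace = 1)
    (hM₁ : (1 - M).PosSemidef) (hM₂ : (1 + M).PosSemidef) : |(ρ * M).trace.re| ≤ 1 := by
  have h₁ := (Complex.nonneg_iff.mp (hρ.trace_mul_nonneg hM₁)).1
  have h₂ := (Complex.nonneg_iff.mp (hρ.trace_mul_nonneg hM₂)).1
  simp only [Matrix.mul_sub, Matrix.mul_add, Matrix.mul_one, trace_sub, trace_add, hρ1,
    Complex.sub_re, Complex.add_re, Complex.one_re] at h₁ h₂
  exact abs_le.mpr ⟨by linarith, by linarith⟩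

theorem one_sub_re_trace_mul_le_re_trace_mul {O P : Matrix n n ℂ} (hρ : ρ.PosSemidef)
    (hρ1 : ρ.trace = 1) (hO : (O - (1 - P)).PosSemidef) :
    1 - (ρ * P).trace.re ≤ (ρ * O).trace.re := by
  have := (Complex.nonneg_iff.mp (hρ.trace_mul_nonneg hO)).1
  simp only [Matrix.mul_sub, Matrix.mul_one, trace_sub, hρ1, Complex.sub_re,
    Complex.one_re] at this
  linarith

theorem two_mul_re_trace_mul_vecMulVec_sub_one_le {v : n → ℂ} (hρ : ρ.PosSemidef)
    (hρ1 : ρ.trace = 1) (hM₁ : (1 - M).PosSemidef) (hM₂ : (1 + M).PosSemidef)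
    (hv : v ⬝ᵥ star v = 1) :
    2 * (ρ * vecMulVec v (star v)).trace.re - 1 ≤
      (vecMulVec v (star v) * M).trace.re * (ρ * M).trace.re +
        √(1 - (vecMulVec v (star v) * M).trace.re ^ 2) * √(1 - (ρ * M).trace.re ^ 2) := by
  set P := vecMulVec v (star v)
  have hP : P.PosSemidef := posSemidef_vecMulVec_self_star v
  have hP1 : P.trace = 1 := (trace_vecMulVec v (star v)).trans hv
  have hρP := hρ.trace_mul_nonneg hP
  set p := (ρ * P).trace.re
  have hp : (ρ * P).trace = p := Complex.eq_re_of_ofReal_le hρP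
  have hp0 : 0 ≤ p := Complex.zero_le_real.mp (hp ▸ hρP)
  have hPρP : P * ρ * Pᴴ = (p : ℂ) • P := by
    rw [← hp]; exact vecMulVec_mul_mul_conjTranspose v ρ
  have bound (A : Matrix n n ℂ) (hA : A.PosSemidef) :
      ‖(P * ρ * A).trace‖ ^ 2 ≤ (ρ * A).trace.re * (p * (P * A).trace.re) := by
    simpa [hPρP, Matrix.smul_mul, trace_smul] using hA.norm_trace_mul_mul_sq_le hρ P
  have hsum : (P * ρ * (1 - M)).trace + (P * ρ * (1 + M)).trace = 2 * p := by
    rw [Matrix.mul_sub, Matrix.mul_add, trace_sub, trace_add, Matrix.mul_one, trace_mul_comm P,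
      hp]
    ring
  have hsplit : 2 * p ≤ ‖(P * ρ * (1 - M)).trace‖ + ‖(P * ρ * (1 + M)).trace‖ := by
    calc 2 * p = ((P * ρ * (1 - M)).trace + (P * ρ * (1 + M)).trace).re := by simp [hsum]
      _ ≤ ‖(P * ρ * (1 - M)).trace + (P * ρ * (1 + M)).trace‖ := Complex.re_le_norm _
      _ ≤ _ := norm_add_le _ _
  refine two_mul_sub_one_le_of_sq_le hp0 (abs_re_trace_mul_le_one hP hP1 hM₁ hM₂)
    (abs_re_trace_mul_le_one hρ hρ1 hM₁ hM₂) hsplit ?_ ?_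
  · simpa [Matrix.mul_sub, hρ1, hP1] using bound _ hM₁
  · simpa [Matrix.mul_add, hρ1, hP1] using bound _ hM₂

end DensityMatrix

theorem exists_bloch_vectors {e : ℝ} {E ω : Fin 2 → ℝ} (he : |e| ≤ 1) (hE : ∀ x, |E x| ≤ 1)
    (hω : ∀ x, 1 - 2 * ω x ≤ e * E x + √(1 - e ^ 2) * √(1 - E x ^ 2)) :
    ∃ (n : Fin 2 → Fin 3 → ℝ) (m k : Fin 3 → ℝ),
      (∀ x, ∑ i, n x i * n x i = 1) ∧ (∑ i, m i * m i = 1) ∧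
      (∑ i, k i * k i = 1) ∧
      (∀ x, E x = ∑ i, n x i * m i) ∧
      (∀ x, (1 + ∑ i, n x i * k i) / 2 ≤ ω x) := by
  set s := √(1 - e ^ 2)
  set t := fun x => √(1 - E x ^ 2)
  have hs : s ^ 2 = 1 - e ^ 2 := Real.sq_sqrt (by nlinarith [abs_le.mp he])
  have ht x : t x ^ 2 = 1 - E x ^ 2 := Real.sq_sqrt (by nlinarith [abs_le.mp (hE x)])
  refine ⟨fun x => ![e * E x + s * t x, s * E x - e * t x, 0], ![e, s, 0], ![-1, 0, 0],
    fun x => ?_, ?_, by simp [Fin.sum_univ_three], fun x => ?_, fun x => ?_⟩ <;>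
    simp only [Fin.sum_univ_three, Matrix.cons_val_zero, Matrix.cons_val_one, Matrix.cons_val_two,
      Matrix.head_cons, Matrix.tail_cons]
  · linear_combination (E x ^ 2 + t x ^ 2) * hs + ht x
  · linear_combination hs
  · linear_combination (-E x) * hs
  · linarith [hω x]

theorem extremePoint_quantumSet_bloch_rep (E ω : Fin 2 → ℝ)
    (h : (E, ω) ∈ Set.extremePoints ℝ QuantumSet) :
    ∃ (n : Fin 2 → Fin 3 → ℝ) (m k : Fin 3 → ℝ),
      (∀ x, ∑ i, n x i * n x i = 1) ∧ (∑ i, m i * m i = 1) ∧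
      (∑ i, k i * k i = 1) ∧
      (∀ x, E x = ∑ i, n x i * m i) ∧
      (∀ x, (1 + ∑ i, n x i * k i) / 2 ≤ ω x) := by
  have hrep : (E, ω) ∈ {b : (Fin 2 → ℝ) × (Fin 2 → ℝ) | IsQuantumRep b.1 b.2} :=
    extremePoints_convexHull_subset h
  obtain ⟨d, ρ, M, O, v, hρ, hρ1, -, hM₁, hM₂, -, -, hv, hO, hρM, hρO⟩ := hrep
  have hv : v ⬝ᵥ star v = 1 := by simp [dotProduct, Complex.mul_conj, ← Complex.ofReal_sum, hv]
  have hE x : (ρ x * M).trace.re = E x := by simp [hρM x]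
  refine exists_bloch_vectors
    (abs_re_trace_mul_le_one (posSemidef_vecMulVec_self_star v)
      ((trace_vecMulVec v (star v)).trans hv) hM₁ hM₂)
    (fun x => hE x ▸ abs_re_trace_mul_le_one (hρ x) (hρ1 x) hM₁ hM₂) fun x => ?_
  have hpure := two_mul_re_trace_mul_vecMulVec_sub_one_le (hρ x) (hρ1 x) hM₁ hM₂ hv
  have hground := one_sub_re_trace_mul_le_re_trace_mul (hρ x) (hρ1 x) hO
  rw [hE x] at hpure
  linarith [hρO x]
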